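/- arXiv:2405.13146 — 2 statements merged into one kernel-verified Lean document; each statement's English description precedes it below -/
import Mathlib

section
/- (Theorem 1, case i_m = n + m.) Assume no two ghost positions are consecutive, i.e. ι k + 1 < ι (k+1) for all k with k + 1 ≤ m − 1, and assume ι (m−1) = n + m. Then for every v : ℝ and every w : ℕ → ℝ there exists a multivariate polynomial p : MvPolynomial (Fin (n+m)) ℝ with total degree at most 2*m such that for every choice of input bits b : ℕ → ℤ with b k ∈ {0,1} for all k and every c implementing the m-plus-bits interface for b, one has v + ∑_{i=1}^{n} w i * (φ* i : ℝ) = MvPolynomial.eval (fun t : Fin (n+m) => ((φ (t + 1)) : ℝ)) p. -/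
/-!
Write `G` for the set of ghost positions and `N = n + m`. The non-ghost position `j` carries the
hidden bit with index `Nat.count (· ∉ G) j`, so the hidden feature `φ* i` is the product of the
signs `2 b j - 1` over the non-ghost `j ∈ [a, N)`, where `a` is the position with
`Nat.count (· ∉ G) a = i`. Every sign squares to `1`, so this is the product over all of `[a, N)`
times the product over the ghosts in it, and a block product `∏_{q ≤ k < r}` equals `φ q * φ r`.
Hence `φ* i = φ a * φ N * ∏_{g ∈ G ∩ [a, N)} φ g * φ (g + 1)`, a monomial in the observable
features of degree at most `2 m` because `N` is itself a ghost.
-/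

/-- `c` implements the `m`-plus-bits challenge interface for input bits `b`,
with ghost-bit positions `ι 0 < ι 1 < ... < ι (m-1)`, for an `n`-stage PUF. -/
def MPlusBitsInterface (n m : ℕ) (hm : 1 ≤ m) (ι : Fin m → ℕ)
    (b c : ℕ → ℤ) : Prop :=
  (∀ i, 1 ≤ i → i < ι ⟨0, hm⟩ → c i = b i) ∧
  (∀ k (hk : k + 1 ≤ m - 1), ∀ i,
    ι ⟨k, by omega⟩ < i → i < ι ⟨k + 1, by omega⟩ → c (i - (k + 1)) = b i) ∧
  (∀ i, ι ⟨m - 1, by omega⟩ < i → i ≤ n + m → c (i - m) = b i)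

open Finset MvPolynomial

theorem Nat.count_not_add_count (p : ℕ → Prop) [DecidablePred p] (n : ℕ) :
    Nat.count (fun x => ¬ p x) n + Nat.count p n = n := by
  simp [Nat.count_eq_card_filter_range, add_comm, card_filter_add_card_filter_not]

theorem Nat.pos_of_count_pos {p : ℕ → Prop} [DecidablePred p] {a : ℕ} (h : 0 < Nat.count p a) :
    0 < a :=
  Nat.lt_of_count_lt_count (p := p) (a := 0) (by rwa [Nat.count_zero])

section Products

variable {α M : Type*} [CommMonoid M]

theorem prod_filter_count_eq_prod_Ico (p : ℕ → Prop) [DecidablePred p] (f : ℕ → M) {a q : ℕ}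
    (haq : a ≤ q) :
    ∏ j ∈ (Ico a q).filter p, f (Nat.count p j) =
      ∏ t ∈ Ico (Nat.count p a) (Nat.count p q), f t := by
  induction q, haq using Nat.le_induction with
  | base => simp
  | succ q haq ih =>
    rw [Nat.Ico_succ_right_eq_insert_Ico haq, filter_insert, Nat.count_succ]
    split_ifs with hq
    · rw [prod_insert (by simp), ih, prod_Ico_succ_top (Nat.count_monotone p haq), mul_comm]
    · simpa using ih

theorem prod_filter_not_eq_mul_of_mul_self {f : α → M} (hf : ∀ x, f x * f x = 1)
    (s : Finset α) (p : α → Prop) [DecidablePred p] :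
    ∏ x ∈ s.filter (fun x => ¬ p x), f x = (∏ x ∈ s, f x) * ∏ x ∈ s.filter p, f x := by
  rw [← prod_filter_mul_prod_filter_not s p, mul_comm (∏ x ∈ s.filter p, f x), mul_assoc,
    ← prod_mul_distrib, prod_eq_one (fun x _ => hf x), mul_one]

theorem prod_Ico_eq_mul_of_mul_self {f : ℕ → M} (hf : ∀ x, f x * f x = 1) {a q N : ℕ}
    (haq : a ≤ q) (hqN : q ≤ N + 1) :
    ∏ x ∈ Ico a q, f x = (∏ x ∈ Icc a N, f x) * ∏ x ∈ Icc q N, f x := by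
  rw [← Ico_add_one_right_eq_Icc, ← Ico_add_one_right_eq_Icc, ← prod_Ico_consecutive f haq hqN,
    mul_assoc, ← prod_mul_distrib, prod_eq_one (fun x _ => hf x), mul_one]

end Products

section Ghosts

variable {m : ℕ} {ι : Fin m → ℕ}

theorem Monotone.val_lt_card_filter_lt_iff (hι : Monotone ι) (j : ℕ) (l : Fin m) :
    (l : ℕ) < #{l' | ι l' < j} ↔ ι l < j := by
  constructor
  · intro hl
    by_contra! hjl
    have : #{l' | ι l' < j} ≤ #(Iio l) :=
      card_le_card fun l' hl' => by
        simp only [mem_filter, mem_univ, true_and] at hl'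
        simpa using lt_of_not_ge fun hle => (hl'.trans_le (hjl.trans (hι hle))).false
    rw [Fin.card_Iio] at this
    omega
  · intro hl
    have : #(Iic l) ≤ #{l' | ι l' < j} :=
      card_le_card fun l' hl' => by simpa using (hι (Finset.mem_Iic.1 hl')).trans_lt hl
    rw [Fin.card_Iic] at this
    omega

theorem Nat.count_mem_image (hι : Function.Injective ι) (j : ℕ) :
    Nat.count (· ∈ univ.image ι) j = #{l | ι l < j} := by
  rw [Nat.count_eq_card_filter_range, ← Finset.card_image_of_injective _ hι]
  congr 1
  ext x
  simp only [mem_filter, mem_range, mem_image, mem_univ, true_and]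
  exact ⟨fun ⟨hx, l, hl⟩ => ⟨l, hl ▸ hx, hl⟩, fun ⟨l, hlj, hl⟩ => ⟨hl ▸ hlj, l, hl⟩⟩

theorem StrictMono.count_not_mem_image_of_last_eq (hι : StrictMono ι) {n : ℕ} (hm : 1 ≤ m)
    (hlast : ι ⟨m - 1, by omega⟩ = n + m) :
    Nat.count (· ∉ univ.image ι) (n + m) = n + 1 := by
  have hbelow : #{l | ι l < n + m} = m - 1 := by
    have : (univ.filter fun l => ι l < n + m) = univ.erase ⟨m - 1, by omega⟩ := by
      ext l
      rw [mem_filter, mem_erase, ← hlast, hι.lt_iff_lt, Fin.lt_def, Ne, Fin.ext_iff]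
      have := l.isLt
      simp only [mem_univ, and_true, true_and]
      omega
    rw [this, card_erase_of_mem (mem_univ _), card_univ, Fintype.card_fin]
  have := Nat.count_not_add_count (· ∈ univ.image ι) (n + m)
  rw [Nat.count_mem_image hι.injective, hbelow] at this
  omega

end Ghosts

theorem MPlusBitsInterface.apply_count {n m : ℕ} {hm : 1 ≤ m} {ι : Fin m → ℕ} {b c : ℕ → ℤ}
    (hc : MPlusBitsInterface n m hm ι b c) (hι : StrictMono ι) {j : ℕ} (hj1 : 1 ≤ j)
    (hjN : j ≤ n + m) (hj : j ∉ univ.image ι) :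
    c (Nat.count (· ∉ univ.image ι) j) = b j := by
  obtain ⟨hbelow, hbetween, habove⟩ := hc
  have hcount : Nat.count (· ∉ univ.image ι) j = j - #{l | ι l < j} := by
    have := Nat.count_not_add_count (· ∈ univ.image ι) j
    rw [Nat.count_mem_image hι.injective] at this
    omega
  have hrank := hι.monotone.val_lt_card_filter_lt_iff j
  have hkm : #{l | ι l < j} ≤ m := (card_filter_le _ _).trans (card_fin m).le
  have hne : ∀ l, ι l ≠ j := by simpa using hj
  rw [hcount]
  generalize #{l | ι l < j} = k at hrank hkm
  obtain hk | rfl := hkm.lt_or_eq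
  · have hjk : j < ι ⟨k, hk⟩ :=
      lt_of_le_of_ne (not_lt.1 fun h => lt_irrefl k ((hrank _).2 h)) (hne _).symm
    cases k with
    | zero => simpa using hbelow j hj1 hjk
    | succ k => exact hbetween k (by omega) j ((hrank ⟨k, by omega⟩).1 (by simp)) hjk
  · exact habove j ((hrank ⟨k - 1, by omega⟩).1 (by simp; omega)) hjN

theorem card_filter_mem_Ico_le (G : Finset ℕ) {a N : ℕ} (hN : N ∈ G) :
    #((Ico a N).filter (· ∈ G)) ≤ #G - 1 := by
  rw [← card_erase_of_mem hN]
  exact card_le_card fun x hx => by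
    simp only [mem_filter, mem_Ico] at hx
    exact mem_erase.2 ⟨hx.1.2.ne, hx.2⟩

theorem MPlusBitsInterface.prod_eq_mul_prod_ghosts {n m : ℕ} {hm : 1 ≤ m} {ι : Fin m → ℕ}
    {b c : ℕ → ℤ} (hc : MPlusBitsInterface n m hm ι b c) (hι : StrictMono ι)
    (hlast : ι ⟨m - 1, by omega⟩ = n + m) {M : Type*} [CommMonoid M] {f : ℤ → M}
    (hf : ∀ k, f (b k) * f (b k) = 1) {i a : ℕ} (hi : i ∈ Icc 1 n)
    (ha : Nat.count (· ∉ univ.image ι) a = i) :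
    ∏ t ∈ Icc i n, f (c t) =
      (∏ k ∈ Icc a (n + m), f (b k)) * (∏ k ∈ Icc (n + m) (n + m), f (b k)) *
        ∏ g ∈ (Ico a (n + m)).filter (· ∈ univ.image ι),
          (∏ k ∈ Icc g (n + m), f (b k)) * ∏ k ∈ Icc (g + 1) (n + m), f (b k) := by
  rw [mem_Icc] at hi
  have hN := hι.count_not_mem_image_of_last_eq hm hlast
  have ha0 : 0 < a := Nat.pos_of_count_pos (ha ▸ hi.1)
  have haN : a < n + m := Nat.lt_of_count_lt_count ((ha.trans_lt (by omega)).trans_eq hN.symm)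
  calc ∏ t ∈ Icc i n, f (c t)
      = ∏ t ∈ Ico (Nat.count (· ∉ univ.image ι) a) (Nat.count (· ∉ univ.image ι) (n + m)),
          f (c t) := by rw [ha, hN, Ico_add_one_right_eq_Icc]
    _ = ∏ j ∈ (Ico a (n + m)).filter (· ∉ univ.image ι),
          f (c (Nat.count (· ∉ univ.image ι) j)) :=
        (prod_filter_count_eq_prod_Ico _ _ haN.le).symm
    _ = ∏ j ∈ (Ico a (n + m)).filter (· ∉ univ.image ι), f (b j) := prod_congr rfl fun j hj => by
        simp only [mem_filter, mem_Ico] at hj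
        rw [hc.apply_count hι (by omega) (by omega) hj.2]
    _ = (∏ j ∈ Ico a (n + m), f (b j)) *
          ∏ j ∈ (Ico a (n + m)).filter (· ∈ univ.image ι), f (b j) :=
        prod_filter_not_eq_mul_of_mul_self (f := fun k => f (b k)) hf _ _
    _ = _ := by
        rw [prod_Ico_eq_mul_of_mul_self (f := fun k => f (b k)) hf (N := n + m) haN.le (by omega)]
        refine congrArg _ (prod_congr rfl fun g hg => ?_)
        simp only [mem_filter, mem_Ico] at hg
        rw [← prod_Ico_eq_mul_of_mul_self (f := fun k => f (b k)) hf (N := n + m)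
          (Nat.le_succ g) (by omega), Nat.Ico_succ_singleton, prod_singleton]

section FeaturePolynomials

variable {R : Type*} [CommSemiring R] {N : ℕ}

/-- Variable `s : Fin N` stands for the feature `φ (s + 1) = ∏_{s < k ≤ N} (2 b k - 1)`;
`featureVar N t` is `φ t` for `1 ≤ t`, where `φ t = 1` for `t > N`. -/
noncomputable def featureVar (N t : ℕ) : MvPolynomial (Fin N) R :=
  if h : t - 1 < N then X ⟨t - 1, h⟩ else 1

theorem totalDegree_featureVar_le (t : ℕ) :
    (featureVar N t : MvPolynomial (Fin N) R).totalDegree ≤ 1 := by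
  unfold featureVar
  split_ifs
  · exact (totalDegree_monomial_le _ _).trans (by simp)
  · simp

theorem eval_featureVar (g : ℕ → R) {t : ℕ} (ht : 1 ≤ t) :
    eval (fun s : Fin N => ∏ k ∈ Icc ((s : ℕ) + 1) N, g k) (featureVar N t) =
      ∏ k ∈ Icc t N, g k := by
  unfold featureVar
  split_ifs with h
  · simp [Nat.sub_add_cancel ht]
  · rw [map_one, Icc_eq_empty (by omega), prod_empty]

noncomputable def featureMonomial (N a : ℕ) (S : Finset ℕ) : MvPolynomial (Fin N) R :=
  featureVar N a * featureVar N N * ∏ g ∈ S, featureVar N g * featureVar N (g + 1)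

theorem totalDegree_featureMonomial_le (a : ℕ) (S : Finset ℕ) :
    (featureMonomial N a S : MvPolynomial (Fin N) R).totalDegree ≤ 2 * (#S + 1) := by
  have hvar := totalDegree_featureVar_le (R := R) (N := N)
  have hprod : (∏ g ∈ S, featureVar N g * featureVar N (g + 1) : MvPolynomial (Fin N) R).totalDegree
      ≤ 2 * #S := by
    refine (totalDegree_finsetProd _ _).trans ?_
    calc ∑ g ∈ S, _ ≤ ∑ _g ∈ S, 2 := sum_le_sum fun g _ =>
          (totalDegree_mul _ _).trans (add_le_add (hvar g) (hvar (g + 1)))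
      _ = 2 * #S := by simp [mul_comm]
  calc _ ≤ _ := totalDegree_mul _ _
    _ ≤ _ := add_le_add ((totalDegree_mul _ _).trans (add_le_add (hvar a) (hvar N))) hprod
    _ = 2 * (#S + 1) := by ring

theorem eval_featureMonomial (g : ℕ → R) {a : ℕ} {S : Finset ℕ} (ha : 1 ≤ a) (hN : 1 ≤ N)
    (hS : ∀ j ∈ S, 1 ≤ j) :
    eval (fun s : Fin N => ∏ k ∈ Icc ((s : ℕ) + 1) N, g k) (featureMonomial N a S) =
      (∏ k ∈ Icc a N, g k) * (∏ k ∈ Icc N N, g k) *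
        ∏ j ∈ S, (∏ k ∈ Icc j N, g k) * ∏ k ∈ Icc (j + 1) N, g k := by
  simp only [featureMonomial, map_mul, map_prod, eval_featureVar g ha, eval_featureVar g hN,
    eval_featureVar g (Nat.le_add_left 1 _)]
  exact congrArg _ (prod_congr rfl fun j hj => by rw [eval_featureVar g (hS j hj)])

end FeaturePolynomials

/-- Theorem 1, case i_m = n + m: if no two ghost positions are
consecutive, the argument of the sign function in the APUF response model is,
as a function of the observable feature vector `(φ(1), ..., φ(n+m))`, given by
a multivariate polynomial of total degree at most `2m` (case `i_m = n + m`). -/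
theorem stmt8 (n m : ℕ) (hm : 1 ≤ m)
    (ι : Fin m → ℕ) (hmono : StrictMono ι)
    (hlast1 : ι ⟨m - 1, by omega⟩ = n + m) :
    ∀ (v : ℝ) (w : ℕ → ℝ),
      ∃ p : MvPolynomial (Fin (n + m)) ℝ,
        p.totalDegree ≤ 2 * m ∧
        ∀ (b c : ℕ → ℤ), (∀ k, b k = 0 ∨ b k = 1) →
          MPlusBitsInterface n m hm ι b c →
          v + ∑ i ∈ Finset.Icc 1 n,
              w i * ((∏ k ∈ Finset.Icc i n, (2 * c k - 1) : ℤ) : ℝ)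
            = MvPolynomial.eval
                (fun t : Fin (n + m) =>
                  ((∏ k ∈ Finset.Icc ((t : ℕ) + 1) (n + m), (2 * b k - 1) : ℤ) : ℝ))
                p := by
  intro v w
  set G := univ.image ι
  set a := Nat.nth (· ∉ G)
  have hcount (i : ℕ) : Nat.count (· ∉ G) (a i) = i :=
    Nat.count_nth_of_infinite G.finite_toSet.infinite_compl i
  refine ⟨C v + ∑ i ∈ Icc 1 n,
    w i • featureMonomial (n + m) (a i) ((Ico (a i) (n + m)).filter (· ∈ G)), ?_, ?_⟩
  · have hG : #G = m := by rw [card_image_of_injective _ hmono.injective, card_fin]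
    refine (totalDegree_add _ _).trans (max_le (by simp) ?_)
    refine (totalDegree_finsetSum _ _).trans (Finset.sup_le fun i _ => ?_)
    refine (totalDegree_smul_le _ _).trans ((totalDegree_featureMonomial_le _ _).trans ?_)
    have := card_filter_mem_Ico_le G (a := a i) (hlast1 ▸ mem_image_of_mem ι (mem_univ _))
    omega
  · intro b c hb hc
    have hsign (k : ℕ) : ((2 * b k - 1 : ℤ) : ℝ) * ((2 * b k - 1 : ℤ) : ℝ) = 1 := by
      rcases hb k with h | h <;> simp [h]
    simp only [Int.cast_prod, map_add, eval_C, map_sum, smul_eval]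
    refine congrArg _ (sum_congr rfl fun i hi => congrArg _ ?_)
    have ha0 : 0 < a i := Nat.pos_of_count_pos (by rw [hcount]; exact (mem_Icc.1 hi).1)
    rw [eval_featureMonomial _ ha0 (by omega) fun j hj =>
      ha0.trans_le (mem_Ico.1 (mem_filter.1 hj).1).1]
    exact hc.prod_eq_mul_prod_ghosts (f := fun z => ((2 * z - 1 : ℤ) : ℝ)) hmono hlast1 hsign hi
      (hcount i)
end

section
/- (Theorem 1, lower bound on the order.) Assume no two ghost positions are consecutive, i.e. ι k + 1 < ι (k+1) for all k with k + 1 ≤ m − 1, and assume 1 < ι 0 and ι (m−1) < n + m. Let v : ℝ and w : ℕ → ℝ, and suppose there exists i with 1 ≤ i < ι 0 and w i ≠ 0. Then every multivariate polynomial p : MvPolynomial (Fin (n+m)) ℝ satisfying, for every choice of input bits b : ℕ → ℤ with b k ∈ {0,1} for all k and every c implementing the m-plus-bits interface for b, the identity v + ∑_{i=1}^{n} w i * (φ* i : ℝ) = MvPolynomial.eval (fun t : Fin (n+m) => ((φ (t + 1)) : ℝ)) p, has total degree at least 2*m + 1. (Together with the matching upper bound, the separating polynomial of the interfaced APUF is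 of order exactly 2m+1 in this case.) -/
/-!
Identify a bit string with its support `S ⊆ [1, n + m]` and let `spin S k = ±1` be the sign
of bit `k`. The observable feature `φ (t + 1)` is the Walsh function of `[t + 1, n + m]`, and the
hidden feature `φ* i` is the Walsh function of the set `H i` of positions read by the hidden
stages `i, …, n`; for `i₀ < ι 0` this set is `[i₀, n + m]` with the ghost positions removed.
Distinct Walsh functions are orthogonal, so correlating both sides of the identity with
`walsh (H i₀)` gives `w i₀ * 2 ^ (n + m) ≠ 0`. On the polynomial side a monomial `x ^ d`
correlates with `walsh (H i₀)` only if every prefix sum `d 0 + ⋯ + d (k - 1)` has the parity of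
`[k ∈ H i₀]`, which makes `d t` odd wherever membership in `H i₀` changes between `t` and
`t + 1`: at `i₀ - 1` and at `ι l - 1` and `ι l` for every ghost. Since no two ghosts are adjacent
these are `2m + 1` distinct points, so `x ^ d` has degree at least `2m + 1`.
-/

open Finset

namespace MPlusBits

def bits (S : Finset ℕ) (k : ℕ) : ℤ := if k ∈ S then 1 else 0

def spin (S : Finset ℕ) (k : ℕ) : ℝ := if k ∈ S then 1 else -1

def walsh (A S : Finset ℕ) : ℝ := ∏ k ∈ A, spin S k

lemma bits_eq_zero_or_one (S : Finset ℕ) (k : ℕ) : bits S k = 0 ∨ bits S k = 1 := by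
  unfold bits; split_ifs <;> simp

lemma cast_prod_two_mul_bits_sub_one (A S : Finset ℕ) :
    ((∏ k ∈ A, (2 * bits S k - 1) : ℤ) : ℝ) = walsh A S := by
  push_cast
  refine prod_congr rfl fun k _ => ?_
  unfold bits spin
  split_ifs <;> norm_num

lemma cast_prod_two_mul_bits_comp_sub_one {f : ℕ → ℕ} (hf : Function.Injective f)
    (A S : Finset ℕ) :
    ((∏ k ∈ A, (2 * bits S (f k) - 1) : ℤ) : ℝ) = walsh (A.image f) S := by
  rw [← cast_prod_two_mul_bits_sub_one, prod_image fun _ _ _ _ h => hf h]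

lemma sum_powerset_prod_spin_pow (U : Finset ℕ) (E : ℕ → ℕ) :
    ∑ S ∈ U.powerset, ∏ k ∈ U, spin S k ^ E k
      = if ∀ k ∈ U, Even (E k) then 2 ^ #U else 0 := by
  have hsplit : ∀ S ∈ U.powerset, ∏ k ∈ U, spin S k ^ E k
      = (∏ k ∈ S, (1 : ℝ) ^ E k) * ∏ k ∈ U \ S, (-1 : ℝ) ^ E k := by
    intro S hS
    rw [← prod_sdiff (mem_powerset.1 hS), mul_comm]
    congr 1 <;> refine prod_congr rfl fun k hk => ?_ <;> simp_all [spin]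
  have hfactor : ∀ k, (1 : ℝ) ^ E k + (-1) ^ E k = if Even (E k) then 2 else 0 := by
    intro k
    rcases Nat.even_or_odd (E k) with h | h
    · rw [if_pos h, h.neg_one_pow]; norm_num
    · rw [if_neg (Nat.not_even_iff_odd.2 h), h.neg_one_pow]; norm_num
  rw [sum_congr rfl hsplit, ← prod_add]
  simp only [hfactor, prod_ite_zero, prod_const]

lemma walsh_eq_prod_pow {A U : Finset ℕ} (hA : A ⊆ U) (S : Finset ℕ) :
    walsh A S = ∏ k ∈ U, spin S k ^ (if k ∈ A then 1 else 0) := by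
  simp only [pow_ite, pow_one, pow_zero, prod_ite_mem, inter_eq_right.2 hA, walsh]

lemma sum_walsh_mul_walsh {A B U : Finset ℕ} (hA : A ⊆ U) (hB : B ⊆ U) :
    ∑ S ∈ U.powerset, walsh A S * walsh B S = if A = B then 2 ^ #U else 0 := by
  simp only [walsh_eq_prod_pow hA, walsh_eq_prod_pow hB, ← prod_mul_distrib, ← pow_add,
    sum_powerset_prod_spin_pow]
  congr 1
  refine propext ⟨fun h => ?_, ?_⟩
  · ext k
    by_cases hk : k ∈ U
    · have := h k hk
      split_ifs at this <;> simp_all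
    · exact iff_of_false (fun h => hk (hA h)) (fun h => hk (hB h))
  · rintro rfl k _
    split_ifs <;> decide

lemma sum_walsh_expansion_mul_walsh {α : Type*} {U : Finset ℕ} {s : Finset α}
    {A : α → Finset ℕ} (hA : Set.InjOn A s) (hsub : ∀ i ∈ s, A i ⊆ U) {i₀ : α} (hi₀ : i₀ ∈ s)
    (hne : A i₀ ≠ ∅) (v : ℝ) (w : α → ℝ) :
    ∑ S ∈ U.powerset, (v + ∑ i ∈ s, w i * walsh (A i) S) * walsh (A i₀) S = w i₀ * 2 ^ #U := by
  have hmean : ∑ S ∈ U.powerset, walsh (A i₀) S = 0 := by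
    simpa [walsh, hne.symm] using sum_walsh_mul_walsh (empty_subset U) (hsub i₀ hi₀)
  simp only [add_mul, sum_add_distrib, ← mul_sum, hmean, mul_zero, zero_add, sum_mul, mul_assoc]
  rw [sum_comm, sum_eq_single i₀]
  · rw [← mul_sum, sum_walsh_mul_walsh (hsub i₀ hi₀) (hsub i₀ hi₀), if_pos rfl]
  · intro i hi hii₀
    rw [← mul_sum, sum_walsh_mul_walsh (hsub i hi) (hsub i₀ hi₀),
      if_neg fun h => hii₀ (hA hi hi₀ h), mul_zero]
  · exact fun h => absurd hi₀ h

section Degree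

variable {N : ℕ}

def prefixSum (d : Fin N → ℕ) (k : ℕ) : ℕ := ∑ t ∈ {t : Fin N | (t : ℕ) < k}, d t

def boundary (N : ℕ) (G : Finset ℕ) : Finset ℕ := {t ∈ range N | ¬(t ∈ G ↔ t + 1 ∈ G)}

lemma prefixSum_monotone (d : Fin N → ℕ) : Monotone (prefixSum d) :=
  fun _ _ h => sum_le_sum_of_subset (monotone_filter_right _ fun _ _ ht => lt_of_lt_of_le ht h)

lemma prefixSum_zero (d : Fin N → ℕ) : prefixSum d 0 = 0 := by
  simp [prefixSum]

lemma prefixSum_self (d : Fin N → ℕ) : prefixSum d N = ∑ t, d t := by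
  simp [prefixSum]

lemma prod_prod_Icc_pow {M : Type*} [CommMonoid M] (f : ℕ → M) (d : Fin N → ℕ) :
    ∏ t : Fin N, (∏ k ∈ Icc ((t : ℕ) + 1) N, f k) ^ d t
      = ∏ k ∈ Icc 1 N, f k ^ prefixSum d k := by
  simp only [← prod_pow]
  rw [prod_comm' (t' := Icc 1 N) (s' := fun k => {t : Fin N | (t : ℕ) < k})
    (fun t k => by simp only [mem_univ, true_and, mem_Icc, mem_filter]; omega)]
  exact prod_congr rfl fun k _ => prod_pow_eq_pow_sum _ _ _

lemma card_parity_change_le {D : ℕ → ℕ} (hD : Monotone D) (N : ℕ) :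
    #{t ∈ range N | ¬(Even (D t) ↔ Even (D (t + 1)))} ≤ D N - D 0 := by
  rw [← sum_range_tsub hD, card_eq_sum_ones, sum_filter]
  refine sum_le_sum fun t _ => ?_
  split_ifs with h
  · exact Nat.zero_le _
  · have hne : D t ≠ D (t + 1) := fun he => h (he ▸ Iff.rfl)
    have := hD (Nat.le_add_right t 1)
    omega

lemma card_boundary_le_sum (d : Fin N → ℕ) {G : Finset ℕ} (hG : 0 ∉ G)
    (h : ∀ k ∈ Icc 1 N, Even (prefixSum d k + if k ∈ G then 1 else 0)) :
    #(boundary N G) ≤ ∑ t, d t := by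
  have hpar : ∀ k ≤ N, (Even (prefixSum d k) ↔ k ∉ G) := by
    intro k hk
    rcases k.eq_zero_or_pos with rfl | hk0
    · simp [prefixSum_zero, hG]
    · have := h k (mem_Icc.2 ⟨hk0, hk⟩)
      split_ifs at this with hkG <;> simp_all [Nat.even_add_one]
  calc #(boundary N G)
      = #{t ∈ range N | ¬(Even (prefixSum d t) ↔ Even (prefixSum d (t + 1)))} := by
        refine congrArg card (filter_congr fun t ht => ?_)
        have ht := mem_range.1 ht
        rw [hpar t ht.le, hpar (t + 1) ht]
        tauto
    _ ≤ prefixSum d N - prefixSum d 0 := card_parity_change_le (prefixSum_monotone d) N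
    _ = ∑ t, d t := by rw [prefixSum_self, prefixSum_zero, Nat.sub_zero]

lemma sum_walsh_monomial_mul_walsh (d : Fin N → ℕ) {G : Finset ℕ} (hG : G ⊆ Icc 1 N) :
    ∑ S ∈ (Icc 1 N).powerset,
        (∏ t : Fin N, walsh (Icc ((t : ℕ) + 1) N) S ^ d t) * walsh G S
      = if ∀ k ∈ Icc 1 N, Even (prefixSum d k + if k ∈ G then 1 else 0)
        then 2 ^ N else 0 := by
  simp only [walsh_eq_prod_pow hG]
  simp only [walsh, prod_prod_Icc_pow, ← prod_mul_distrib, ← pow_add,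
    sum_powerset_prod_spin_pow, Nat.card_Icc, Nat.add_sub_cancel]

lemma card_boundary_le_totalDegree (p : MvPolynomial (Fin N) ℝ) {G : Finset ℕ}
    (hG : G ⊆ Icc 1 N)
    (h : ∑ S ∈ (Icc 1 N).powerset,
      MvPolynomial.eval (fun t : Fin N => walsh (Icc ((t : ℕ) + 1) N) S) p * walsh G S ≠ 0) :
    #(boundary N G) ≤ p.totalDegree := by
  simp only [MvPolynomial.eval_eq', sum_mul, mul_assoc] at h
  rw [sum_comm] at h
  simp only [← mul_sum, sum_walsh_monomial_mul_walsh _ hG] at h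
  obtain ⟨d, hd, hne⟩ := exists_ne_zero_of_sum_ne_zero h
  calc #(boundary N G) ≤ ∑ t, d t :=
        card_boundary_le_sum d (fun h0 => by simpa using hG h0)
          (ite_ne_right_iff.1 (right_ne_zero_of_mul hne)).1
    _ ≤ p.totalDegree := by simpa [Finsupp.sum_fintype] using MvPolynomial.le_totalDegree hd

lemma card_boundary_le_totalDegree_of_walsh_expansion (p : MvPolynomial (Fin N) ℝ)
    {α : Type*} {s : Finset α} {A : α → Finset ℕ} (hA : Set.InjOn A s)
    (hsub : ∀ i ∈ s, A i ⊆ Icc 1 N) (v : ℝ) (w : α → ℝ)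
    (hp : ∀ S ∈ (Icc 1 N).powerset, v + ∑ i ∈ s, w i * walsh (A i) S
      = MvPolynomial.eval (fun t : Fin N => walsh (Icc ((t : ℕ) + 1) N) S) p)
    {i₀ : α} (hi₀ : i₀ ∈ s) (hw : w i₀ ≠ 0) :
    #(boundary N (A i₀)) ≤ p.totalDegree := by
  rcases eq_or_ne (A i₀) ∅ with hA₀ | hA₀
  · simp [hA₀, boundary]
  refine card_boundary_le_totalDegree p (hsub i₀ hi₀) ?_
  rw [← sum_congr rfl fun S hS => congrArg (· * walsh (A i₀) S) (hp S hS),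
    sum_walsh_expansion_mul_walsh hA hsub hi₀ hA₀]
  exact mul_ne_zero hw (pow_ne_zero _ two_ne_zero)

end Degree

section HiddenPositions

variable {n m : ℕ} {ι : Fin m → ℕ}

/-- The input position read by hidden stage `j`. -/
noncomputable def hiddenPos (ι : Fin m → ℕ) : ℕ → ℕ := Nat.nth (· ∉ univ.image ι)

lemma infinite_notMem (s : Finset ℕ) : (Set.ofPred (· ∉ s)).Infinite :=
  s.finite_toSet.infinite_compl

lemma hiddenPos_strictMono : StrictMono (hiddenPos ι) :=
  Nat.nth_strictMono (infinite_notMem _)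

lemma hiddenPos_notMem (j : ℕ) : hiddenPos ι j ∉ univ.image ι :=
  Nat.nth_mem_of_infinite (infinite_notMem _) j

lemma count_notMem_image (hι : Function.Injective ι) (i : ℕ) :
    Nat.count (· ∉ univ.image ι) i = i - #{l | ι l < i} := by
  have hghosts : #{k ∈ range i | k ∈ univ.image ι} = #{l | ι l < i} := by
    rw [← card_image_of_injective _ hι]
    congr 1
    ext k
    simp only [mem_filter, mem_range, mem_image, mem_univ, true_and]
    grind
  have hsplit := card_filter_add_card_filter_not (s := range i) (· ∈ univ.image ι)
  rw [card_range] at hsplit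
  rw [Nat.count_eq_card_filter_range]
  omega

section Separated

variable (hι : StrictMono ι) {i j : ℕ} (hj : j ≤ m)
  (hbelow : ∀ l : Fin m, (l : ℕ) < j → ι l < i) (habove : ∀ l : Fin m, j ≤ l → i < ι l)
include hι hj hbelow habove

lemma count_notMem_image_of_separates : Nat.count (· ∉ univ.image ι) i = i - j := by
  have hcard : #{l | ι l < i} = j := by
    rw [← min_eq_right hj, ← Fin.card_filter_val_lt]
    exact congrArg card <| filter_congr fun l _ =>
      ⟨fun h => by_contra fun h' => (habove l (not_lt.1 h')).not_gt h, hbelow l⟩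
  rw [count_notMem_image hι.injective, hcard]

lemma hiddenPos_sub_of_separates : hiddenPos ι (i - j) = i := by
  rw [← count_notMem_image_of_separates hι hj hbelow habove]
  refine Nat.nth_count ?_
  simp only [mem_image, mem_univ, true_and, not_exists]
  intro l
  rcases lt_or_ge (l : ℕ) j with h | h
  · exact (hbelow l h).ne
  · exact (habove l h).ne'

end Separated

theorem mPlusBitsInterface_comp_hiddenPos (hm : 1 ≤ m) (hι : StrictMono ι) (b : ℕ → ℤ) :
    MPlusBitsInterface n m hm ι b (b ∘ hiddenPos ι) := by
  refine ⟨fun i _ hi => ?_, fun k hk i hki hik => ?_, fun i hi _ => ?_⟩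
  · simpa using congrArg b (hiddenPos_sub_of_separates (i := i) hι (Nat.zero_le m)
      (fun l hl => absurd hl (Nat.not_lt_zero _))
      (fun l _ => hi.trans_le (hι.monotone (Fin.mk_le_mk.2 (Nat.zero_le l)))))
  · exact congrArg b (hiddenPos_sub_of_separates hι (by omega)
      (fun l hl => (hι.monotone (Fin.mk_le_mk.2 (by omega))).trans_lt hki)
      (fun l hl => hik.trans_le (hι.monotone (Fin.mk_le_mk.2 hl))))
  · exact congrArg b (hiddenPos_sub_of_separates hι le_rfl
      (fun l _ => (hι.monotone (Fin.mk_le_mk.2 (by omega))).trans_lt hi)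
      (fun l hl => absurd l.isLt (not_lt.2 hl)))

lemma injOn_image_hiddenPos_Icc :
    Set.InjOn (fun i => (Icc i n).image (hiddenPos ι)) (Set.Iic n) := by
  intro i hi j hj h
  rw [image_inj hiddenPos_strictMono.injective] at h
  have hi' := left_mem_Icc.2 (Set.mem_Iic.1 hi)
  have hj' := left_mem_Icc.2 (Set.mem_Iic.1 hj)
  rw [h, mem_Icc] at hi'
  rw [← h, mem_Icc] at hj'
  omega

section Bounded

variable (hι : StrictMono ι) (habove : ∀ l, ι l < n + m)
include hι habove

lemma count_notMem_image_add : Nat.count (· ∉ univ.image ι) (n + m) = n := by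
  simpa using count_notMem_image_of_separates hι le_rfl (fun l _ => habove l)
    (fun l hl => absurd l.isLt (not_lt.2 hl))

lemma hiddenPos_self : hiddenPos ι n = n + m := by
  simpa using hiddenPos_sub_of_separates (i := n + m) hι le_rfl (fun l _ => habove l)
    (fun l hl => absurd l.isLt (not_lt.2 hl))

lemma image_hiddenPos_Icc_subset (i : ℕ) : (Icc i n).image (hiddenPos ι) ⊆ Icc i (n + m) := by
  intro k hk
  obtain ⟨j, hj, rfl⟩ := mem_image.1 hk
  rw [mem_Icc] at hj ⊢
  exact ⟨hj.1.trans (hiddenPos_strictMono.id_le j),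
    hiddenPos_self hι habove ▸ hiddenPos_strictMono.monotone hj.2⟩

lemma image_hiddenPos_Icc {i₀ : ℕ} (hbelow : ∀ l, i₀ < ι l) :
    (Icc i₀ n).image (hiddenPos ι) = Icc i₀ (n + m) \ univ.image ι := by
  refine Subset.antisymm (fun k hk => mem_sdiff.2 ⟨image_hiddenPos_Icc_subset hι habove i₀ hk, ?_⟩)
    fun k hk => ?_
  · obtain ⟨j, -, rfl⟩ := mem_image.1 hk
    exact hiddenPos_notMem j
  · obtain ⟨hk, hkP⟩ := mem_sdiff.1 hk
    rw [mem_Icc] at hk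
    have h₀ : Nat.count (· ∉ univ.image ι) i₀ = i₀ :=
      count_notMem_image_of_separates hι (Nat.zero_le m)
        (fun l hl => absurd hl (Nat.not_lt_zero _)) (fun l _ => hbelow l)
    refine mem_image.2 ⟨Nat.count (· ∉ univ.image ι) k, mem_Icc.2 ⟨?_, ?_⟩, Nat.nth_count hkP⟩
    · exact h₀ ▸ Nat.count_monotone _ hk.1
    · exact count_notMem_image_add hι habove ▸ Nat.count_monotone _ hk.2

end Bounded

end HiddenPositions

section Ghosts

variable {m : ℕ} {ι : Fin m → ℕ}

lemma add_one_ne_of_gaps (hι : StrictMono ι)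
    (hnc : ∀ k (hk : k + 1 ≤ m - 1), ι ⟨k, by omega⟩ + 1 < ι ⟨k + 1, by omega⟩) (a b : Fin m) :
    ι a + 1 ≠ ι b := by
  intro h
  have hab : (a : ℕ) < b := hι.lt_iff_lt.1 (by omega)
  have hnext : ι ⟨a + 1, by omega⟩ ≤ ι b := hι.monotone (Fin.le_iff_val_le_val.2 hab)
  have hgap := hnc a (by omega)
  simp only [Fin.eta] at hgap
  omega

lemma two_mul_add_one_le_card_boundary (hι : Function.Injective ι)
    (hsep : ∀ a b, ι a + 1 ≠ ι b) {N i₀ : ℕ} (hi₀ : i₀ ∈ Icc 1 N) (hbelow : ∀ l, i₀ < ι l)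
    (habove : ∀ l, ι l < N) :
    2 * m + 1 ≤ #(boundary N (Icc i₀ N \ univ.image ι)) := by
  set P := univ.image ι
  rw [mem_Icc] at hi₀
  have hP : #P = m := by rw [card_image_of_injective _ hι, card_univ, Fintype.card_fin]
  have hPpred : #(P.image (· - 1)) = m := by
    rw [card_image_of_injOn, hP]
    intro a ha b hb hab
    obtain ⟨la, -, rfl⟩ := mem_image.1 ha
    obtain ⟨lb, -, rfl⟩ := mem_image.1 hb
    have := hbelow la
    have := hbelow lb
    simp only at hab
    omega
  have hdisj : Disjoint (P.image (· - 1)) P := by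
    refine disjoint_left.2 fun a ha haP => ?_
    obtain ⟨b, hb, rfl⟩ := mem_image.1 ha
    obtain ⟨la, -, hla⟩ := mem_image.1 haP
    obtain ⟨lb, -, rfl⟩ := mem_image.1 hb
    have := hbelow lb
    exact hsep la lb (by omega)
  have hfirst : i₀ - 1 ∉ P.image (· - 1) ∪ P := by
    simp only [mem_union, mem_image, P, mem_univ, true_and]
    rintro (⟨_, ⟨l, rfl⟩, h⟩ | ⟨l, h⟩) <;> have := hbelow l <;> omega
  calc 2 * m + 1 = #(insert (i₀ - 1) (P.image (· - 1) ∪ P)) := by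
        rw [card_insert_of_notMem hfirst, card_union_of_disjoint hdisj, hP, hPpred]; ring
    _ ≤ #(boundary N (Icc i₀ N \ P)) := by
        refine card_le_card fun t ht => ?_
        simp only [boundary, mem_filter, mem_range, mem_sdiff, mem_Icc, P, mem_image, mem_univ,
          true_and, mem_insert, mem_union, not_exists] at ht ⊢
        rcases ht with rfl | ⟨_, ⟨l, rfl⟩, rfl⟩ | ⟨l, rfl⟩
        · refine ⟨by omega, fun h => ?_⟩
          have := h.2 ⟨⟨by omega, by omega⟩, fun l hl => (hbelow l).ne' (by omega)⟩
          omega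
        · have := hbelow l
          have := habove l
          refine ⟨by omega, fun h => ?_⟩
          exact (h.1 ⟨⟨by omega, by omega⟩, fun l' hl' => hsep l' l (by omega)⟩).2 l (by omega)
        · have := hbelow l
          have := habove l
          refine ⟨this, fun h => ?_⟩
          exact (h.2 ⟨⟨by omega, by omega⟩, fun l' hl' => hsep l l' hl'.symm⟩).2 l rfl

end Ghosts

end MPlusBits

open MPlusBits

/-- Theorem 1, lower bound on the order: if no two ghost
positions are consecutive, `1 < ι 0`, `ι (m-1) < n + m`, and some weight
`w i` with `1 ≤ i < ι 0` is nonzero, then every polynomial representing the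
APUF delay sum in terms of the observable features has total degree at least
`2m + 1`. -/
theorem stmt10 (n m : ℕ) (hm : 1 ≤ m)
    (ι : Fin m → ℕ) (hmono : StrictMono ι)
    (hlast : ι ⟨m - 1, by omega⟩ < n + m)
    (hnc : ∀ k (hk : k + 1 ≤ m - 1), ι ⟨k, by omega⟩ + 1 < ι ⟨k + 1, by omega⟩)
    (v : ℝ) (w : ℕ → ℝ)
    (hw : ∃ i, 1 ≤ i ∧ i < ι ⟨0, hm⟩ ∧ w i ≠ 0) :
    ∀ p : MvPolynomial (Fin (n + m)) ℝ,
      (∀ (b c : ℕ → ℤ), (∀ k, b k = 0 ∨ b k = 1) →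
        MPlusBitsInterface n m hm ι b c →
        v + ∑ i ∈ Finset.Icc 1 n,
            w i * ((∏ k ∈ Finset.Icc i n, (2 * c k - 1) : ℤ) : ℝ)
          = MvPolynomial.eval
              (fun t : Fin (n + m) =>
                ((∏ k ∈ Finset.Icc ((t : ℕ) + 1) (n + m), (2 * b k - 1) : ℤ) : ℝ))
              p) →
      2 * m + 1 ≤ p.totalDegree := by
  intro p hp
  obtain ⟨i₀, hi₀, hi₀ι, hwi₀⟩ := hw
  have hbelow : ∀ l, i₀ < ι l := fun l =>
    hi₀ι.trans_le (hmono.monotone (Fin.le_iff_val_le_val.2 (Nat.zero_le _)))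
  have habove : ∀ l, ι l < n + m := fun l =>
    (hmono.monotone (Fin.le_iff_val_le_val.2 (Nat.le_sub_one_of_lt l.isLt))).trans_lt hlast
  have hi₀n : i₀ ∈ Icc 1 n := by
    have := card_le_card (s := univ.image ι) (t := Ioo i₀ (n + m)) fun k hk => by
      obtain ⟨l, -, rfl⟩ := mem_image.1 hk
      exact mem_Ioo.2 ⟨hbelow l, habove l⟩
    rw [card_image_of_injective _ hmono.injective, card_univ, Fintype.card_fin,
      Nat.card_Ioo] at this
    exact mem_Icc.2 ⟨hi₀, by omega⟩
  calc 2 * m + 1 ≤ #(boundary (n + m) (Icc i₀ (n + m) \ univ.image ι)) :=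
        two_mul_add_one_le_card_boundary hmono.injective (add_one_ne_of_gaps hmono hnc)
          (Icc_subset_Icc_right (by omega) hi₀n) hbelow habove
    _ ≤ p.totalDegree := by
        rw [← image_hiddenPos_Icc hmono habove hbelow]
        refine card_boundary_le_totalDegree_of_walsh_expansion p
          (injOn_image_hiddenPos_Icc.mono fun i hi => (mem_Icc.1 hi).2)
          (fun i hi => (image_hiddenPos_Icc_subset hmono habove i).trans
            (Icc_subset_Icc_left (mem_Icc.1 hi).1)) v w (fun S _ => ?_) hi₀n hwi₀
        simpa only [Function.comp_apply, cast_prod_two_mul_bits_sub_one,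
          cast_prod_two_mul_bits_comp_sub_one hiddenPos_strictMono.injective] using
          hp (bits S) (bits S ∘ hiddenPos ι) (bits_eq_zero_or_one S)
            (mPlusBitsInterface_comp_hiddenPos hm hmono _)
end
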